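/- arXiv:2111.11708 — 2 statements merged into one kernel-verified Lean document; each statement's English description precedes it below -/
import Mathlib

section
/- Let γ > 1 and let ρ : ℝⁿ → ℝ≥0 be a continuous function with ρ^{γ-1} differentiable on the open set Ω = {ρ > 0}, with ∇(ρ^{γ-1})(x) → 0 as x in Ω approaches any point x̌ of ∂Ω. Fix x̌ ∈ ∂Ω and a unit vector v, and suppose that for every δ₀ > 0 there exist h₁, h₂ ∈ (0, δ₀) with x̌ + h₁v ∈ Ω and x̌ + h₂v ∉ Ω. Then lim_{h→0+} ρ^{γ-1}(x̌ + hv)/h = 0. -/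
/-!
Along the ray `t ↦ xb + t v`, let `t₀` be the last zero of `f` before `h`. On `(t₀, h]` the ray
stays in `Ω`, where for small `h` the derivative along `v` is at most `ε` because the gradient
tends to `0` at `xb`, so
the mean value theorem on `[t₀, h]` gives
`|f (xb + h v)| = |f (xb + h v) - f (xb + t₀ v)| ≤ ε (h - t₀) ≤ ε h`.
-/

open Set Filter Topology

theorem abs_le_mul_sub_of_abs_deriv_le_of_ne_zero {g g' : ℝ → ℝ} {a b C : ℝ} (hab : a ≤ b)
    (hC : 0 ≤ C) (hg : ContinuousOn g (Icc a b)) (hga : g a = 0)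
    (hderiv : ∀ t ∈ Ioc a b, g t ≠ 0 → HasDerivAt g (g' t) t ∧ |g' t| ≤ C) :
    |g b| ≤ C * (b - a) := by
  by_cases hgb : g b = 0
  · rw [hgb, abs_zero]
    exact mul_nonneg hC (sub_nonneg.2 hab)
  set Z := Icc a b ∩ g ⁻¹' {0}
  have hZ : IsCompact Z :=
    isCompact_Icc.of_isClosed_subset (hg.preimage_isClosed_of_isClosed isClosed_Icc
      isClosed_singleton) inter_subset_left
  obtain ⟨⟨hat₀, ht₀b⟩, hgt₀⟩ : sSup Z ∈ Z := hZ.sSup_mem ⟨a, ⟨le_rfl, hab⟩, hga⟩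
  set t₀ := sSup Z
  have ht₀b' : t₀ < b := ht₀b.lt_of_ne fun h ↦ hgb (h ▸ hgt₀)
  have hne : ∀ t ∈ Ioc t₀ b, g t ≠ 0 := fun t ht hgt ↦
    ht.1.not_ge (le_csSup hZ.bddAbove ⟨⟨hat₀.trans ht.1.le, ht.2⟩, hgt⟩)
  have hIoc : ∀ t ∈ Ioc t₀ b, t ∈ Ioc a b := fun t ht ↦ ⟨hat₀.trans_lt ht.1, ht.2⟩
  obtain ⟨c, hc, hslope⟩ := exists_hasDerivAt_eq_slope g g' ht₀b'
    (hg.mono (Icc_subset_Icc_left hat₀))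
    fun t ht ↦ (hderiv t (hIoc t (Ioo_subset_Ioc_self ht)) (hne t (Ioo_subset_Ioc_self ht))).1
  have hc' := Ioo_subset_Ioc_self hc
  rw [show g t₀ = 0 from hgt₀, sub_zero, eq_div_iff (sub_pos.2 ht₀b').ne'] at hslope
  calc |g b| = |g' c| * (b - t₀) := by rw [← hslope, abs_mul, abs_of_pos (sub_pos.2 ht₀b')]
    _ ≤ C * (b - a) := by
      gcongr
      exact (hderiv c (hIoc c hc') (hne c hc')).2

theorem HasFDerivAt.hasDerivAt_comp_add_smul {E F : Type*} [NormedAddCommGroup E]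
    [NormedSpace ℝ E] [NormedAddCommGroup F] [NormedSpace ℝ F] {f : E → F} {f' : E →L[ℝ] F} {x v : E} {t : ℝ}
    (hf : HasFDerivAt f f' (x + t • v)) : HasDerivAt (fun s : ℝ ↦ f (x + s • v)) (f' v) t := by
  have hline : HasDerivAt (fun s : ℝ ↦ x + s • v) v t := by
    simpa using ((hasDerivAt_id t).smul_const v).const_add x
  exact hf.comp_hasDerivAt t hline

theorem isLittleO_comp_add_smul_of_tendsto_fderiv_nhdsWithin {E : Type*} [NormedAddCommGroup E]
    [NormedSpace ℝ E] {f : E → ℝ} {Ω : Set E} {x : E} (v : E) (hΩ : IsOpen Ω)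
    (hf : Continuous f) (hsupp : Function.support f ⊆ Ω) (hdiff : DifferentiableOn ℝ f Ω)
    (hgrad : Tendsto (fderiv ℝ f) (𝓝[Ω] x) (𝓝 0)) (hx : f x = 0) :
    (fun h : ℝ ↦ f (x + h • v)) =o[𝓝[>] 0] id := by
  refine Asymptotics.isLittleO_iff.2 fun ε hε ↦ ?_
  have hgrad_v : ∀ᶠ y in 𝓝[Ω] x, |fderiv ℝ f y v| ≤ ε := by
    have := ((ContinuousLinearMap.apply ℝ ℝ v).continuous.tendsto 0).comp hgrad
    exact (Metric.tendsto_nhds.1 this ε hε).mono fun y hy ↦ by simpa using hy.le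
  have hline : Tendsto (fun t : ℝ ↦ x + t • v) (𝓝 0) (𝓝 x) :=
    (by fun_prop : Continuous fun t : ℝ ↦ x + t • v).tendsto' 0 x (by simp)
  obtain ⟨δ, hδ, hball⟩ := Metric.eventually_nhds_iff_ball.1
    (hline.eventually (eventually_nhdsWithin_iff.1 hgrad_v))
  filter_upwards [Ioo_mem_nhdsGT hδ] with h ⟨hh₀, hhδ⟩
  have hbound := abs_le_mul_sub_of_abs_deriv_le_of_ne_zero
    (g := fun t ↦ f (x + t • v)) (g' := fun t ↦ fderiv ℝ f (x + t • v) v)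
    hh₀.le hε.le (by fun_prop) (by simpa using hx) fun t ⟨ht₀, hth⟩ hft ↦ by
      have hΩt : x + t • v ∈ Ω := hsupp hft
      refine ⟨(hdiff.differentiableAt (hΩ.mem_nhds hΩt)).hasFDerivAt.hasDerivAt_comp_add_smul,
        hball t ?_ hΩt⟩
      rw [Metric.mem_ball, Real.dist_0_eq_abs, abs_of_pos ht₀]
      exact hth.trans_lt hhδ
  simpa [abs_of_pos hh₀] using hbound

theorem power_density_over_h_tendsto_zero_general
    {n : ℕ} (γ : ℝ) (hγ : 1 < γ)
    (ρ : EuclideanSpace ℝ (Fin n) → ℝ)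
    (hρc : Continuous ρ) (hρnn : ∀ x, 0 ≤ ρ x)
    (Ω : Set (EuclideanSpace ℝ (Fin n))) (hΩ : Ω = {x | 0 < ρ x})
    (f : EuclideanSpace ℝ (Fin n) → ℝ) (hf : ∀ x, f x = ρ x ^ (γ - 1))
    (hdiff : DifferentiableOn ℝ f Ω)
    (hgrad : ∀ z ∈ frontier Ω, Tendsto (fun x => fderiv ℝ f x) (𝓝[Ω] z) (𝓝 0))
    (xb : EuclideanSpace ℝ (Fin n)) (hxb : xb ∈ frontier Ω)
    (v : EuclideanSpace ℝ (Fin n)) :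
    Tendsto (fun h : ℝ => f (xb + h • v) / h) (𝓝[>] (0:ℝ)) (𝓝 0) := by
  have hγ₁ : 0 < γ - 1 := sub_pos.2 hγ
  have hΩopen : IsOpen Ω := hΩ ▸ isOpen_lt continuous_const hρc
  have hfc : Continuous f := funext hf ▸ hρc.rpow_const fun _ ↦ Or.inr hγ₁.le
  have hsupp : Function.support f ⊆ Ω := fun x hfx ↦ by
    rw [hΩ]
    refine (hρnn x).lt_of_ne fun hρx ↦ hfx ?_
    rw [hf, ← hρx, Real.zero_rpow hγ₁.ne']
  have hxb₀ : f xb = 0 :=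
    Function.notMem_support.1 fun h ↦ (hΩopen.frontier_eq ▸ hxb).2 (hsupp h)
  exact (isLittleO_comp_add_smul_of_tendsto_fderiv_nhdsWithin v hΩopen hfc hsupp hdiff
    (hgrad xb hxb) hxb₀).tendsto_div_nhds_zero

/-- If `ρ ≥ 0` is continuous with open support `Ω = {ρ > 0}`, `ρ^(γ-1)` is differentiable
on `Ω` with gradient tending to `0` at every boundary point, and the ray `xb + h v`
(for `h → 0+`) oscillates between `Ω` and its complement, then
`ρ^(γ-1)(xb + h v)/h → 0` as `h → 0+`. -/
theorem power_density_over_h_tendsto_zero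
    {n : ℕ} (γ : ℝ) (hγ : 1 < γ)
    (ρ : EuclideanSpace ℝ (Fin n) → ℝ)
    (hρc : Continuous ρ) (hρnn : ∀ x, 0 ≤ ρ x)
    (Ω : Set (EuclideanSpace ℝ (Fin n))) (hΩ : Ω = {x | 0 < ρ x})
    (f : EuclideanSpace ℝ (Fin n) → ℝ) (hf : ∀ x, f x = ρ x ^ (γ - 1))
    (hdiff : DifferentiableOn ℝ f Ω)
    (hgrad : ∀ z ∈ frontier Ω, Tendsto (fun x => fderiv ℝ f x) (𝓝[Ω] z) (𝓝 0))
    (xb : EuclideanSpace ℝ (Fin n)) (hxb : xb ∈ frontier Ω)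
    (v : EuclideanSpace ℝ (Fin n)) (hv : ‖v‖ = 1)
    (hosc : ∀ δ₀ > (0:ℝ), ∃ h₁ ∈ Ioo (0:ℝ) δ₀, ∃ h₂ ∈ Ioo (0:ℝ) δ₀,
      xb + h₁ • v ∈ Ω ∧ xb + h₂ • v ∉ Ω) :
    Tendsto (fun h : ℝ => f (xb + h • v) / h) (𝓝[>] (0:ℝ)) (𝓝 0) :=
  power_density_over_h_tendsto_zero_general γ hγ ρ hρc hρnn Ω hΩ f hf hdiff hgrad xb hxb v
end

section
/- Let γ ∈ (1,2] and ρ₁, ρ₂ ≥ 0 be real numbers, and w₁, w₂ ∈ ℝ³. Define the relative entropy η* := (1/(γ-1))[ρ₂^γ - ρ₁^γ - γρ₁^{γ-1}(ρ₂ - ρ₁)] + (1/2)ρ₂|w₂ - w₁|². Then η* ≥ 0, and moreover there is a constant C = C(γ) > 0 such that η* ≥ C (ρ₁ + ρ₂)^{γ-2} (ρ₂ - ρ₁)² + (1/2)ρ₂|w₂ - w₁|² whenever ρ₁ + ρ₂ > 0. -/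
/-!
On `[0, M]` the second derivative `γ(γ-1)t^(γ-2)` of `t ↦ t^γ` is at least `γ(γ-1)M^(γ-2)`
because `γ ≤ 2`, so `t ↦ t^γ` is `γ(γ-1)M^(γ-2)`-strongly convex there, and the convexity gap
of an `m`-strongly convex function at two points is at least `m/2` times their squared distance.
Taking `M = ρ₁ + ρ₂` bounds the internal-energy part of `η*` below by
`γ/2 (ρ₁+ρ₂)^(γ-2) (ρ₂-ρ₁)² ≥ 0`; the kinetic part is nonnegative.
-/

open Set

theorem ConvexOn.add_mul_sub_le_of_hasDerivWithinAt {S : Set ℝ} {f : ℝ → ℝ} {f' x y : ℝ}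
    (hf : ConvexOn ℝ S f) (hx : x ∈ S) (hy : y ∈ S) (hf' : HasDerivWithinAt f f' S x) :
    f x + f' * (y - x) ≤ f y := by
  rcases lt_trichotomy x y with hxy | rfl | hyx
  · have := hf.le_slope_of_hasDerivWithinAt hx hy hxy hf'
    rw [slope_def_field, le_div_iff₀ (sub_pos.2 hxy)] at this
    linarith
  · simp
  · have := hf.slope_le_of_hasDerivWithinAt hy hx hyx hf'
    rw [slope_def_field, div_le_iff₀ (sub_pos.2 hyx)] at this
    linarith

theorem StrongConvexOn.add_mul_sub_add_le_of_hasDerivWithinAt {S : Set ℝ} {m : ℝ} {f : ℝ → ℝ}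
    {f' x y : ℝ} (hf : StrongConvexOn S m f) (hx : x ∈ S) (hy : y ∈ S)
    (hf' : HasDerivWithinAt f f' S x) :
    f x + f' * (y - x) + m / 2 * (y - x) ^ 2 ≤ f y := by
  rw [strongConvexOn_iff_convex] at hf
  have hg : HasDerivWithinAt (fun t => f t - m / 2 * ‖t‖ ^ 2) (f' - m * x) S x := by
    simp only [Real.norm_eq_abs, sq_abs]
    exact (hf'.sub (((hasDerivAt_pow 2 x).hasDerivWithinAt (s := S)).const_mul (m / 2))).congr_deriv
      (by norm_num; ring)
  have := hf.add_mul_sub_le_of_hasDerivWithinAt hx hy hg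
  simp only [Real.norm_eq_abs, sq_abs] at this
  linarith

theorem strongConvexOn_rpow_Icc {p M : ℝ} (hp₁ : 1 ≤ p) (hp₂ : p ≤ 2) :
    StrongConvexOn (Icc 0 M) (p * (p - 1) * M ^ (p - 2)) fun t => t ^ p := by
  rw [strongConvexOn_iff_convex]
  simp only [Real.norm_eq_abs, sq_abs]
  apply convexOn_of_hasDerivWithinAt2_nonneg (convex_Icc 0 M)
    (f' := fun t => p * t ^ (p - 1) - p * (p - 1) * M ^ (p - 2) * t)
    (f'' := fun t => p * (p - 1) * t ^ (p - 2) - p * (p - 1) * M ^ (p - 2))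
  · exact ((Real.continuous_rpow_const (by linarith)).sub (by fun_prop)).continuousOn
  · intro t _
    exact ((Real.hasDerivAt_rpow_const (Or.inr hp₁)).sub
      ((hasDerivAt_pow 2 t).const_mul _)).hasDerivWithinAt.congr_deriv (by norm_num; ring)
  · intro t ht
    rw [interior_Icc] at ht
    refine (((Real.hasDerivAt_rpow_const (Or.inl ht.1.ne')).const_mul p).sub
      ((hasDerivAt_id t).const_mul _)).hasDerivWithinAt.congr_deriv ?_
    rw [show p - 1 - 1 = p - 2 by ring]
    ring
  · intro t ht
    rw [interior_Icc] at ht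
    have hpow : M ^ (p - 2) ≤ t ^ (p - 2) :=
      Real.rpow_le_rpow_of_nonpos ht.1 ht.2.le (by linarith)
    have hcoef : 0 ≤ p * (p - 1) := mul_nonneg (by linarith) (by linarith)
    exact sub_nonneg.2 (mul_le_mul_of_nonneg_left hpow hcoef)

theorem rpow_sub_rpow_sub_mul_ge_sq {p a b : ℝ} (hp₁ : 1 ≤ p) (hp₂ : p ≤ 2) (ha : 0 ≤ a)
    (hb : 0 ≤ b) :
    p * (p - 1) / 2 * (a + b) ^ (p - 2) * (b - a) ^ 2 ≤
      b ^ p - a ^ p - p * a ^ (p - 1) * (b - a) := by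
  have := (strongConvexOn_rpow_Icc (M := a + b) hp₁ hp₂).add_mul_sub_add_le_of_hasDerivWithinAt
    ⟨ha, by linarith⟩ ⟨hb, by linarith⟩ (Real.hasDerivAt_rpow_const (Or.inr hp₁)).hasDerivWithinAt
  linarith

/-- Nonnegativity and quadratic lower bound for the relative entropy
`η* = (1/(γ-1))[ρ₂^γ - ρ₁^γ - γρ₁^{γ-1}(ρ₂-ρ₁)] + (1/2)ρ₂|w₂-w₁|²` for `γ ∈ (1,2]`. -/
theorem relative_entropy_nonneg_and_lower_bound
    (γ : ℝ) (hγ : γ ∈ Set.Ioc (1:ℝ) 2) :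
    ∃ C > (0:ℝ), ∀ (ρ₁ ρ₂ : ℝ) (w₁ w₂ : EuclideanSpace ℝ (Fin 3)),
      0 ≤ ρ₁ → 0 ≤ ρ₂ →
      (0 ≤ (1/(γ-1)) * (ρ₂ ^ γ - ρ₁ ^ γ - γ * ρ₁ ^ (γ-1) * (ρ₂ - ρ₁))
            + (1/2) * ρ₂ * ‖w₂ - w₁‖^2) ∧
      (0 < ρ₁ + ρ₂ →
        C * (ρ₁ + ρ₂) ^ (γ - 2) * (ρ₂ - ρ₁)^2 + (1/2) * ρ₂ * ‖w₂ - w₁‖^2 ≤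
          (1/(γ-1)) * (ρ₂ ^ γ - ρ₁ ^ γ - γ * ρ₁ ^ (γ-1) * (ρ₂ - ρ₁))
            + (1/2) * ρ₂ * ‖w₂ - w₁‖^2) := by
  obtain ⟨hγ₁, hγ₂⟩ := hγ
  refine ⟨γ / 2, by linarith, fun ρ₁ ρ₂ w₁ w₂ h₁ h₂ => ?_⟩
  have hgap := rpow_sub_rpow_sub_mul_ge_sq hγ₁.le hγ₂ h₁ h₂
  have hbound : γ / 2 * (ρ₁ + ρ₂) ^ (γ - 2) * (ρ₂ - ρ₁) ^ 2 ≤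
      1 / (γ - 1) * (ρ₂ ^ γ - ρ₁ ^ γ - γ * ρ₁ ^ (γ - 1) * (ρ₂ - ρ₁)) := by
    rw [one_div_mul_eq_div, le_div_iff₀ (by linarith)]
    linarith
  have hquad : 0 ≤ γ / 2 * (ρ₁ + ρ₂) ^ (γ - 2) * (ρ₂ - ρ₁) ^ 2 := by positivity
  have hkin : 0 ≤ 1 / 2 * ρ₂ * ‖w₂ - w₁‖ ^ 2 := by positivity
  exact ⟨by linarith, fun _ => by linarith⟩
end
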